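/- arXiv:2202.03802 — 3 statements merged into one kernel-verified Lean document; each statement's English description precedes it below -/
import Mathlib

section
/- For a subset S ⊆ Δ, say that φ restricted to S is topologically free if for every n ≥ 1 the set {x ∈ X : x, φ(x), …, φⁿ⁻¹(x) all lie in S and φⁿ(x) = x} has empty interior in X. Then φ restricted to Δ_reg is topologically free if and only if φ restricted to Δ_pos is topologically free. -/
open scoped ZeroAtInfty

noncomputable section

variable {X : Type*} [TopologicalSpace X]

/-- The fibre of `φ : Δ → X` over `y`. -/
def Fiber (Δ : Set X) (φ : X → X) (y : X) : Set X := {x | x ∈ Δ ∧ φ x = y}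

/-- `ρ : Δ → [0,∞)` is a potential with bound `M`: it is nonnegative on `Δ`, the sums
`Σ_{x ∈ φ⁻¹(y)} ρ(x)` are (summable and) bounded by `M`, and for every `a ∈ C₀(Δ)` the
function `L(a)(y) = Σ_{x ∈ φ⁻¹(y)} ρ(x) a(x)` belongs to `C₀(X)`. -/
def IsPotential (Δ : Set X) (φ : X → X) (ρ : X → ℝ) (M : ℝ) : Prop :=
  (∀ x ∈ Δ, 0 ≤ ρ x) ∧
  (∀ y : X, Summable fun x : Fiber Δ φ y => ρ x.1) ∧
  (∀ y : X, (∑' x : Fiber Δ φ y, ρ x.1) ≤ M) ∧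
  ∀ a : C₀(X, ℂ), (∀ x ∉ Δ, a x = 0) →
    ∃ b : C₀(X, ℂ), ∀ y : X, b y = ∑' x : Fiber Δ φ y, (ρ x.1 : ℂ) * a x.1

/-- `Δ_pos`: the set of points of `Δ` where `ρ` is strictly positive. -/
def Dpos (Δ : Set X) (ρ : X → ℝ) : Set X := {x | x ∈ Δ ∧ 0 < ρ x}

/-- `Δ_reg`: the set of points of `Δ_pos` where `ρ` (as a function on `Δ`) is continuous. -/
def Dreg (Δ : Set X) (ρ : X → ℝ) : Set X :=
  {x | x ∈ Δ ∧ 0 < ρ x ∧ ContinuousWithinAt ρ Δ x}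

/-- `φ` restricted to `S` is topologically free: for every `n ≥ 1` the set of points `x` whose
first `n` iterates stay in `S` and with `φⁿ(x) = x` has empty interior in `X`. -/
def TopFreeOn (φ : X → X) (S : Set X) : Prop :=
  ∀ n : ℕ, 1 ≤ n → interior {x | (∀ k < n, φ^[k] x ∈ S) ∧ φ^[n] x = x} = ∅

/-!
Since `Δ_reg ⊆ Δ_pos`, it suffices to show that every point `x` in the interior `U` of the set
of `n`-periodic points with orbit in `Δ_pos` has its orbit in `Δ_reg`. Testing the transfer
operator on bump functions shows that `ρ` is upper semicontinuous on `Δ` and that `φ` maps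
neighbourhoods of points of `Δ_pos` onto neighbourhoods. As every `φ^[m]` is injective on `U`,
`Lⁿ a = (∏_{i<n} ρ ∘ φ^[i]) · a` on `U` for `a` supported in `U`, so this product is continuous
near `x`; a continuous product of positive upper semicontinuous factors has continuous factors,
and continuity of `ρ ∘ φ^[k]` at `x` passes to `ρ` at `φ^[k] x` because `φ^[k]` is open at `x`.
-/

open Filter Topology Set Function Finset

section Semicontinuity

variable {α ι : Type*} [TopologicalSpace α] {x : α}

lemma UpperSemicontinuousAt.mul_of_nonneg {f g : α → ℝ} (hf : UpperSemicontinuousAt f x)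
    (hg : UpperSemicontinuousAt g x) (hf0 : ∀ᶠ z in 𝓝 x, 0 ≤ f z)
    (hg0 : ∀ᶠ z in 𝓝 x, 0 ≤ g z) : UpperSemicontinuousAt (fun z => f z * g z) x := by
  intro y hy
  have hlim : Tendsto (fun δ : ℝ => (f x + δ) * (g x + δ)) (𝓝[>] 0) (𝓝 (f x * g x)) := by
    have hcont : Continuous fun δ : ℝ => (f x + δ) * (g x + δ) := by fun_prop
    simpa using (hcont.tendsto 0).mono_left nhdsWithin_le_nhds
  obtain ⟨δ, hδy, hδ⟩ := ((hlim.eventually (eventually_lt_nhds hy)).and self_mem_nhdsWithin).exists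
  filter_upwards [hf _ (lt_add_of_pos_right _ hδ), hg _ (lt_add_of_pos_right _ hδ), hf0, hg0]
    with z hfz hgz hfz0 hgz0
  exact (mul_lt_mul'' hfz hgz hfz0 hgz0).trans hδy

lemma UpperSemicontinuousAt.finset_prod_of_nonneg {s : Finset ι} {f : ι → α → ℝ}
    (hf : ∀ i ∈ s, UpperSemicontinuousAt (f i) x) (hf0 : ∀ᶠ z in 𝓝 x, ∀ i ∈ s, 0 ≤ f i z) :
    UpperSemicontinuousAt (fun z => ∏ i ∈ s, f i z) x := by
  classical
  induction s using Finset.induction_on with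
  | empty => simpa using upperSemicontinuousAt_const
  | insert i s hi ih =>
    simp only [prod_insert hi]
    refine (hf i (mem_insert_self i s)).mul_of_nonneg
      (ih (fun j hj => hf j (mem_insert_of_mem hj))
        (hf0.mono fun z hz j hj => hz j (mem_insert_of_mem hj)))
      (hf0.mono fun z hz => hz i (mem_insert_self i s)) ?_
    exact hf0.mono fun z hz => prod_nonneg fun j hj => hz j (mem_insert_of_mem hj)

lemma LowerSemicontinuousAt.of_continuousAt_mul {f g : α → ℝ}
    (hfg : ContinuousAt (fun z => f z * g z) x) (hg : UpperSemicontinuousAt g x)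
    (hf0 : ∀ᶠ z in 𝓝 x, 0 ≤ f z) (hgx : 0 < g x) : LowerSemicontinuousAt f x := by
  intro q hq
  have hlim : Tendsto (fun c => f x * g x / c) (𝓝[>] (g x)) (𝓝 (f x)) := by
    have h : Tendsto (fun c => f x * g x / c) (𝓝 (g x)) (𝓝 (f x * g x / g x)) :=
      tendsto_const_nhds.div tendsto_id hgx.ne'
    rw [mul_div_cancel_right₀ _ hgx.ne'] at h
    exact h.mono_left nhdsWithin_le_nhds
  obtain ⟨c, hqc, hc⟩ := ((hlim.eventually (eventually_gt_nhds hq)).and self_mem_nhdsWithin).exists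
  have hc0 : 0 < c := hgx.trans hc
  filter_upwards [hfg.eventually (eventually_gt_nhds ((lt_div_iff₀ hc0).1 hqc)), hg c hc, hf0]
    with z hz hgz hfz
  exact lt_of_mul_lt_mul_right (hz.trans_le (mul_le_mul_of_nonneg_left hgz.le hfz)) hc0.le

lemma continuousAt_of_continuousAt_prod {s : Finset ι} {f : ι → α → ℝ}
    (hf : ∀ i ∈ s, UpperSemicontinuousAt (f i) x) (hf0 : ∀ᶠ z in 𝓝 x, ∀ i ∈ s, 0 ≤ f i z)
    (hfx : ∀ i ∈ s, 0 < f i x) (hprod : ContinuousAt (fun z => ∏ i ∈ s, f i z) x)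
    {k : ι} (hk : k ∈ s) : ContinuousAt (f k) x := by
  classical
  refine continuousAt_iff_lower_upperSemicontinuousAt.2 ⟨?_, hf k hk⟩
  refine LowerSemicontinuousAt.of_continuousAt_mul (g := fun z => ∏ i ∈ s.erase k, f i z)
    ?_ ?_ (hf0.mono fun z hz => hz k hk) (prod_pos fun i hi => hfx i (mem_of_mem_erase hi))
  · convert hprod using 2 with z
    exact mul_prod_erase s (f · z) hk
  · exact .finset_prod_of_nonneg (fun i hi => hf i (mem_of_mem_erase hi))
      (hf0.mono fun z hz i hi => hz i (mem_of_mem_erase hi))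

end Semicontinuity

section PeriodicPoints

variable {α : Type*} {φ : α → α} {S : Set α} {n : ℕ}

def ptsOfPeriodWithin (φ : α → α) (S : Set α) (n : ℕ) : Set α :=
  {x | (∀ k < n, φ^[k] x ∈ S) ∧ φ^[n] x = x}

lemma ptsOfPeriodWithin_mono {T : Set α} (hST : S ⊆ T) :
    ptsOfPeriodWithin φ S n ⊆ ptsOfPeriodWithin φ T n :=
  fun _ hx => ⟨fun k hk => hST (hx.1 k hk), hx.2⟩

lemma iterate_mem_of_mem_ptsOfPeriodWithin (hn : 0 < n) {x : α}
    (hx : x ∈ ptsOfPeriodWithin φ S n) (j : ℕ) : φ^[j] x ∈ S := by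
  rw [← IsPeriodicPt.iterate_mod_apply hx.2]
  exact hx.1 _ (Nat.mod_lt _ hn)

lemma injOn_iterate_ptsOfPeriodWithin (hn : 0 < n) (m : ℕ) :
    InjOn φ^[m] (ptsOfPeriodWithin φ S n) :=
  fun _ hx _ hy h =>
    (IsPeriodicPt.iterate hx.2 m).eq_of_apply_eq_same (IsPeriodicPt.iterate hy.2 m) hn h

end PeriodicPoints

lemma ContinuousOn.continuousAt_iterate {Δ : Set X} {φ : X → X} (hΔ : IsOpen Δ)
    (hφ : ContinuousOn φ Δ) {x : X} :
    ∀ {k : ℕ}, (∀ j < k, φ^[j] x ∈ Δ) → ContinuousAt φ^[k] x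
  | 0, _ => continuousAt_id
  | k + 1, h => by
    rw [iterate_succ']
    exact (hφ.continuousAt (hΔ.mem_nhds (h k k.lt_succ_self))).comp
      (hφ.continuousAt_iterate hΔ fun j hj => h j (hj.trans k.lt_succ_self))

lemma exists_bump [RegularSpace X] [LocallyCompactSpace X] {V : Set X} (hV : IsOpen V) {p : X}
    (hp : p ∈ V) :
    ∃ a : C(X, ℝ), HasCompactSupport a ∧ (∀ x, a x ∈ Icc (0 : ℝ) 1) ∧
      (∀ᶠ x in 𝓝 p, a x = 1) ∧ ∀ x ∉ V, a x = 0 := by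
  obtain ⟨K, hK, hpK, hKV⟩ := exists_compact_subset hV hp
  obtain ⟨a, ha1, ha0, ha_cpt, ha01⟩ := exists_continuous_one_zero_of_isCompact hK
    hV.isClosed_compl (disjoint_compl_right_iff_subset.2 hKV)
  exact ⟨a, ha_cpt, ha01, mem_of_superset (mem_interior_iff_mem_nhds.1 hpK) fun x hx => ha1 hx,
    fun x hx => ha0 hx⟩

lemma HasCompactSupport.exists_zeroAtInfty_ofReal {a : C(X, ℝ)} (ha : HasCompactSupport a) :
    ∃ b : C₀(X, ℂ), ∀ x, b x = a x :=
  ⟨⟨⟨fun x => a x, Complex.continuous_ofReal.comp a.continuous⟩,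
    (ha.comp_left Complex.ofReal_zero).is_zero_at_infty⟩, fun _ => rfl⟩

lemma summable_mul_of_mem_Icc {ι : Type*} {f a : ι → ℝ} (hf : Summable f) (hf0 : ∀ i, 0 ≤ f i)
    (ha : ∀ i, a i ∈ Icc (0 : ℝ) 1) : Summable fun i => f i * a i :=
  hf.of_nonneg_of_le (fun i => mul_nonneg (hf0 i) (ha i).1)
    fun i => mul_le_of_le_one_right (hf0 i) (ha i).2

lemma tsum_mul_le_add_tsum_compl {ι : Type*} {f a : ι → ℝ} (hf : Summable f)
    (hf0 : ∀ i, 0 ≤ f i) (ha : ∀ i, a i ∈ Icc (0 : ℝ) 1) {G : Finset ι} {i₀ : ι} (hi₀ : i₀ ∈ G)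
    (haG : ∀ i ∈ G, i ≠ i₀ → a i = 0) :
    ∑' i, f i * a i ≤ f i₀ + ∑' i : {i // i ∉ G}, f i := by
  have hfa := summable_mul_of_mem_Icc hf hf0 ha
  rw [← hfa.sum_add_tsum_compl (s := G),
    sum_eq_single i₀ (fun i hi hne => by rw [haG i hi hne, mul_zero]) (absurd hi₀)]
  gcongr
  · exact mul_le_of_le_one_right (hf0 i₀) (ha i₀).2
  · exact (hfa.subtype _).tsum_le_tsum (fun i => mul_le_of_le_one_right (hf0 _) (ha _).2)
      (hf.subtype _)

namespace IsPotential

variable {Δ : Set X} {φ : X → X} {ρ : X → ℝ} {M : ℝ}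

lemma exists_continuous_transfer (hpot : IsPotential Δ φ ρ M) {a : C(X, ℝ)}
    (ha : HasCompactSupport a) (haΔ : ∀ x ∉ Δ, a x = 0) :
    ∃ g : C(X, ℝ), ∀ y, g y = ∑' x : Fiber Δ φ y, ρ x * a x := by
  obtain ⟨ac, hac⟩ := ha.exists_zeroAtInfty_ofReal
  obtain ⟨b, hb⟩ := hpot.2.2.2 ac fun x hx => by rw [hac, haΔ x hx, Complex.ofReal_zero]
  refine ⟨⟨fun y => (b y).re, by fun_prop⟩, fun y => ?_⟩
  simp only [ContinuousMap.coe_mk, hb, hac, ← Complex.ofReal_mul, ← Complex.ofReal_tsum,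
    Complex.ofReal_re]

lemma mul_le_tsum_fiber (hpot : IsPotential Δ φ ρ M) {a : X → ℝ}
    (ha : ∀ x, a x ∈ Icc (0 : ℝ) 1) {x : X} (hx : x ∈ Δ) :
    ρ x * a x ≤ ∑' x' : Fiber Δ φ (φ x), ρ x' * a x' :=
  (summable_mul_of_mem_Icc (hpot.2.1 _) (fun x' => hpot.1 _ x'.2.1) fun x' => ha x'.1).le_tsum
    ⟨x, hx, rfl⟩ fun x' _ => mul_nonneg (hpot.1 _ x'.2.1) (ha _).1

/-- Cutting the fibre of `φ p` down to `p` by a bump function, `ρ p` bounds the transfer of the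
bump at `φ p` up to an arbitrarily small tail of the fibre sum; near `p`, `ρ` is then bounded by
the transfer at `φ z` divided by the bump at `z`. -/
theorem upperSemicontinuousAt [LocallyCompactSpace X] [T2Space X] (hΔ : IsOpen Δ)
    (hφ : ContinuousOn φ Δ) (hpot : IsPotential Δ φ ρ M) {p : X} (hp : p ∈ Δ) :
    UpperSemicontinuousAt ρ p := by
  classical
  intro y hy
  let p' : Fiber Δ φ (φ p) := ⟨p, hp, rfl⟩
  have hsum := hpot.2.1 (φ p)
  have hρ0 : ∀ x : Fiber Δ φ (φ p), 0 ≤ ρ x := fun x => hpot.1 _ x.2.1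
  obtain ⟨G₀, hG₀⟩ := eventually_atTop.1 <|
    (tendsto_order.1 (tendsto_tsum_compl_atTop_zero fun x : Fiber Δ φ (φ p) => ρ x)).2 _
      (sub_pos.2 hy)
  set G := insert p' G₀
  have hV : IsOpen (Δ \ Subtype.val '' ((G.erase p' : Finset _) : Set (Fiber Δ φ (φ p)))) :=
    hΔ.sdiff ((G.erase p').finite_toSet.image _).isClosed
  obtain ⟨a, ha_cpt, ha01, ha1, ha0⟩ := exists_bump hV
    ⟨hp, fun ⟨x, hx, hxp⟩ => (mem_erase.1 hx).1 (Subtype.ext hxp)⟩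
  obtain ⟨g, hg⟩ := hpot.exists_continuous_transfer ha_cpt fun x hx => ha0 x fun h => hx h.1
  have hap : a p = 1 := ha1.self_of_nhds
  have hgp : g (φ p) < y := by
    rw [hg]
    calc ∑' x : Fiber Δ φ (φ p), ρ x * a x
        ≤ ρ p + ∑' x : {x // x ∉ G}, ρ x := tsum_mul_le_add_tsum_compl hsum hρ0 (fun _ => ha01 _)
          (mem_insert_self p' G₀) fun x hx hxp => ha0 _ fun h => h.2 ⟨x, mem_erase.2 ⟨hxp, hx⟩, rfl⟩
      _ < y := by linarith [hG₀ G (subset_insert _ _)]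
  have hquot : ContinuousAt (fun z => g (φ z) / a z) p :=
    (g.continuous.continuousAt.comp (hφ.continuousAt (hΔ.mem_nhds hp))).div
      a.continuous.continuousAt (by rw [hap]; exact one_ne_zero)
  filter_upwards [hquot.eventually (eventually_lt_nhds (by rwa [hap, div_one] : g (φ p) / a p < y)),
    a.continuous.continuousAt.eventually (eventually_gt_nhds (by rw [hap]; exact one_pos)),
    hΔ.mem_nhds hp] with z hz haz hzΔ
  refine lt_of_le_of_lt ((le_div_iff₀ haz).2 ?_) hz
  rw [hg]
  exact hpot.mul_le_tsum_fiber ha01 hzΔ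

/-- A bump function around `c` supported in a neighbourhood `N` has a transfer that is positive
at `φ c` and vanishes off `φ '' N`. -/
theorem nhds_le_map [LocallyCompactSpace X] [T2Space X] (hΔ : IsOpen Δ)
    (hpot : IsPotential Δ φ ρ M) {c : X} (hc : c ∈ Dpos Δ ρ) : 𝓝 (φ c) ≤ map φ (𝓝 c) := by
  refine le_map_iff.2 fun N hN => ?_
  obtain ⟨a, ha_cpt, ha01, ha1, ha0⟩ :=
    exists_bump (isOpen_interior.inter hΔ) ⟨mem_interior_iff_mem_nhds.2 hN, hc.1⟩
  obtain ⟨g, hg⟩ := hpot.exists_continuous_transfer ha_cpt fun x hx => ha0 x fun h => hx h.2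
  have hgc : 0 < g (φ c) := by
    rw [hg]
    calc 0 < ρ c * a c := by rw [ha1.self_of_nhds, mul_one]; exact hc.2
      _ ≤ _ := hpot.mul_le_tsum_fiber ha01 hc.1
  refine mem_of_superset (g.continuous.continuousAt.eventually (eventually_gt_nhds hgc))
    fun y hy => ?_
  obtain ⟨x, hx⟩ : ∃ x : Fiber Δ φ y, ρ x * a x ≠ 0 := by
    by_contra! h
    simp [hg, h] at hy
  have hxN : (x : X) ∈ interior N ∩ Δ := by
    by_contra h
    exact hx (by rw [ha0 _ h, mul_zero])
  exact ⟨x, interior_subset hxN.1, x.2.2⟩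

theorem nhds_le_map_iterate [LocallyCompactSpace X] [T2Space X] (hΔ : IsOpen Δ)
    (hpot : IsPotential Δ φ ρ M) {x : X} :
    ∀ {k : ℕ}, (∀ j < k, φ^[j] x ∈ Dpos Δ ρ) → 𝓝 (φ^[k] x) ≤ map φ^[k] (𝓝 x)
  | 0, _ => le_rfl
  | k + 1, h => by
    rw [iterate_succ_apply', iterate_succ', ← Filter.map_map]
    exact (hpot.nhds_le_map hΔ (h k k.lt_succ_self)).trans
      (map_mono (nhds_le_map_iterate hΔ hpot fun j hj => h j (hj.trans k.lt_succ_self)))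

/-- On a set where every `φ^[m]` is injective, only one point of each fibre contributes to the
transfer, so `n` applications of the transfer operator multiply by `ρ` along the orbit. -/
theorem exists_iterate_transfer (hpot : IsPotential Δ φ ρ M) {U : Set X}
    (hUΔ : ∀ z ∈ U, ∀ j, φ^[j] z ∈ Δ) (hinj : ∀ m, InjOn φ^[m] U) (a : C₀(X, ℂ))
    (ha : ∀ x ∉ U, a x = 0) (n : ℕ) :
    ∃ b : C₀(X, ℂ), (∀ w ∉ φ^[n] '' U, b w = 0) ∧
      ∀ z ∈ U, b (φ^[n] z) = (∏ i ∈ range n, (ρ (φ^[i] z) : ℂ)) * a z := by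
  induction n with
  | zero => exact ⟨a, fun w hw => ha w fun h => hw ⟨w, h, rfl⟩, fun z _ => by simp⟩
  | succ n ih =>
    obtain ⟨b, hb0, hb⟩ := ih
    obtain ⟨b', hb'⟩ := hpot.2.2.2 b fun x hx => hb0 x fun ⟨z, hz, hzx⟩ => hx (hzx ▸ hUΔ z hz n)
    have hsupp : ∀ {w} (x : Fiber Δ φ w), (ρ x : ℂ) * b x ≠ 0 → (x : X) ∈ φ^[n] '' U :=
      fun x hx => by_contra fun h => hx (by rw [hb0 _ h, mul_zero])
    refine ⟨b', fun w hw => ?_, fun z hz => ?_⟩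
    · by_contra! hne
      obtain ⟨x, hx⟩ : ∃ x : Fiber Δ φ w, (ρ x : ℂ) * b x ≠ 0 := by
        by_contra! h
        simp [hb', h] at hne
      obtain ⟨z, hz, hzx⟩ := hsupp x hx
      exact hw ⟨z, hz, by rw [iterate_succ_apply', hzx, x.2.2]⟩
    · rw [iterate_succ_apply', hb', tsum_eq_single ⟨φ^[n] z, hUΔ z hz n, rfl⟩]
      · rw [hb z hz, prod_range_succ]
        ring
      · intro x hx
        by_contra hne
        obtain ⟨z', hz', hz'x⟩ := hsupp x hne
        have hzz' : z' = z := hinj (n + 1) hz' hz <| by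
          rw [iterate_succ_apply', iterate_succ_apply', hz'x, x.2.2]
        exact hx (Subtype.ext (by rw [← hz'x, hzz']))

theorem continuousAt_prod_iterate (hpot : IsPotential Δ φ ρ M) [LocallyCompactSpace X]
    [T2Space X] {n : ℕ} (hn : 0 < n) {x : X}
    (hx : x ∈ interior (ptsOfPeriodWithin φ (Dpos Δ ρ) n)) :
    ContinuousAt (fun z => ∏ i ∈ range n, ρ (φ^[i] z)) x := by
  set U := interior (ptsOfPeriodWithin φ (Dpos Δ ρ) n)
  have hUP : U ⊆ ptsOfPeriodWithin φ (Dpos Δ ρ) n := interior_subset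
  obtain ⟨a, ha_cpt, -, ha1, ha0⟩ := exists_bump isOpen_interior hx
  obtain ⟨ac, hac⟩ := ha_cpt.exists_zeroAtInfty_ofReal
  obtain ⟨b, -, hb⟩ := hpot.exists_iterate_transfer
    (fun z hz j => (iterate_mem_of_mem_ptsOfPeriodWithin hn (hUP hz) j).1)
    (fun m => (injOn_iterate_ptsOfPeriodWithin hn m).mono hUP) ac
    (fun z hz => by rw [hac, ha0 z hz, Complex.ofReal_zero]) n
  refine (Complex.continuous_re.comp b.continuous).continuousAt.congr ?_
  filter_upwards [isOpen_interior.mem_nhds hx, ha1] with z hz haz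
  have hbz := hb z hz
  rw [(hUP hz).2, hac, haz, Complex.ofReal_one, mul_one, ← Complex.ofReal_prod] at hbz
  change (b z).re = _
  rw [hbz, Complex.ofReal_re]

end IsPotential

lemma Dreg_subset_Dpos {Δ : Set X} {ρ : X → ℝ} : Dreg Δ ρ ⊆ Dpos Δ ρ :=
  fun _ hx => ⟨hx.1, hx.2.1⟩

theorem interior_ptsOfPeriodWithin_Dpos_subset [LocallyCompactSpace X] [T2Space X]
    {Δ : Set X} {φ : X → X} {ρ : X → ℝ} {M : ℝ} (hΔ : IsOpen Δ) (hφ : ContinuousOn φ Δ)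
    (hpot : IsPotential Δ φ ρ M) {n : ℕ} (hn : 0 < n) :
    interior (ptsOfPeriodWithin φ (Dpos Δ ρ) n) ⊆ ptsOfPeriodWithin φ (Dreg Δ ρ) n := by
  intro x hx
  have hiter : ∀ z ∈ interior (ptsOfPeriodWithin φ (Dpos Δ ρ) n), ∀ j, φ^[j] z ∈ Dpos Δ ρ :=
    fun z hz => iterate_mem_of_mem_ptsOfPeriodWithin hn (interior_subset hz)
  refine ⟨fun k hk => ⟨(hiter x hx k).1, (hiter x hx k).2, ?_⟩, (interior_subset hx).2⟩
  have hfactor : ContinuousAt (fun z => ρ (φ^[k] z)) x :=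
    continuousAt_of_continuousAt_prod (f := fun i z => ρ (φ^[i] z))
      (fun i _ => (hpot.upperSemicontinuousAt hΔ hφ (hiter x hx i).1).comp
        (hφ.continuousAt_iterate hΔ fun j _ => (hiter x hx j).1))
      (eventually_of_mem (isOpen_interior.mem_nhds hx) fun z hz i _ => (hiter z hz i).2.le)
      (fun i _ => (hiter x hx i).2) (hpot.continuousAt_prod_iterate hn hx) (mem_range.2 hk)
  have hρ : ContinuousAt ρ (φ^[k] x) :=
    (map_mono (hpot.nhds_le_map_iterate hΔ fun j _ => hiter x hx j)).trans
      (by rw [Filter.map_map]; exact hfactor)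
  exact hρ.continuousWithinAt

theorem topFree_Dreg_iff_topFree_Dpos_general
    {X : Type*} [TopologicalSpace X] [LocallyCompactSpace X] [T2Space X]
    (Δ : Set X) (φ : X → X) (ρ : X → ℝ) (M : ℝ)
    (hΔ : IsOpen Δ) (hφ : ContinuousOn φ Δ)
    (hpot : IsPotential Δ φ ρ M) :
    TopFreeOn φ (Dreg Δ ρ) ↔ TopFreeOn φ (Dpos Δ ρ) := by
  refine forall₂_congr fun n hn => ?_
  have hinterior : interior (ptsOfPeriodWithin φ (Dreg Δ ρ) n) =
      interior (ptsOfPeriodWithin φ (Dpos Δ ρ) n) :=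
    (interior_mono (ptsOfPeriodWithin_mono Dreg_subset_Dpos)).antisymm
      (interior_maximal (interior_ptsOfPeriodWithin_Dpos_subset hΔ hφ hpot hn) isOpen_interior)
  exact Iff.of_eq (congrArg (· = ∅) hinterior)

/-- `φ` restricted to `Δ_reg` is topologically free if and only if `φ`
restricted to `Δ_pos` is topologically free. -/
theorem topFree_Dreg_iff_topFree_Dpos
    {X : Type*} [TopologicalSpace X] [LocallyCompactSpace X] [T2Space X]
    (Δ : Set X) (φ : X → X) (ρ : X → ℝ) (M : ℝ)
    (hΔ : IsOpen Δ) (hφ : ContinuousOn φ Δ)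
    (hcount : ∀ y : X, (Fiber Δ φ y).Countable)
    (hpot : IsPotential Δ φ ρ M) :
    TopFreeOn φ (Dreg Δ ρ) ↔ TopFreeOn φ (Dpos Δ ρ) :=
  topFree_Dreg_iff_topFree_Dpos_general Δ φ ρ M hΔ hφ hpot
end
end

section
/- Let U ⊆ X be an open set. Then: (1) φ(U ∩ Δ_pos) ⊆ U if and only if for every a ∈ C₀(Δ) vanishing on X ∖ U, the function L(a) vanishes on X ∖ U; (2) φ⁻¹(U) ∩ Δ_reg ⊆ U if and only if every nonnegative a ∈ C_c(Δ_reg) such that L(a) vanishes on X ∖ U itself vanishes on X ∖ U. -/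
/-!
Both equivalences come from comparing a single term `ρ(x) a(x)` with the sum `L(a)(φ x)` of
nonnegative terms, testing with bump functions. Testing at a point of `Δ_reg` needs a bump in
`C_c(Δ_reg)`, i.e. that `Δ_reg` is open. At a regular point `x₀`, summability of `ρ` isolates
`x₀` in its fibre; for a bump `f` around `x₀`, compactness of its support and continuity of
`L(f)` at `φ x₀` force each fibre through a point near `x₀` to meet the support of `f` only in
that point, so `ρ = L(f) ∘ φ` near `x₀` is continuous there.
-/

open scoped ZeroAtInfty

noncomputable section

variable {X : Type*} [TopologicalSpace X]

open Set Filter Topology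

lemma exists_bump_eventuallyEq_one [LocallyCompactSpace X] [T2Space X] {V : Set X}
    (hV : IsOpen V) {x₀ : X} (hx₀ : x₀ ∈ V) :
    ∃ f : C(X, ℝ), HasCompactSupport f ∧ tsupport f ⊆ V ∧ (∀ x, f x ∈ Icc 0 1) ∧
      ⇑f =ᶠ[𝓝 x₀] 1 := by
  obtain ⟨K, hK, hx₀K, hKV⟩ := exists_compact_subset hV hx₀
  obtain ⟨f, hf1, hfc, hfV, hf01⟩ := exists_continuousMap_one_of_isCompact_subset_isOpen hK hV hKV
  exact ⟨f, hfc, hfV, hf01, eventually_of_mem (mem_interior_iff_mem_nhds.mp hx₀K) hf1⟩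

def ofRealC₀ (f : C(X, ℝ)) (hf : HasCompactSupport f) : C₀(X, ℂ) :=
  ⟨⟨fun x => (f x : ℂ), by fun_prop⟩, (hf.comp_left Complex.ofReal_zero).is_zero_at_infty⟩

section ofRealC₀

variable (f : C(X, ℝ)) (hf : HasCompactSupport f)

@[simp]
lemma ofRealC₀_apply (x : X) : ofRealC₀ f hf x = f x := rfl

lemma tsupport_ofRealC₀ : tsupport (ofRealC₀ f hf) = tsupport f :=
  tsupport_comp_eq (g := ((↑) : ℝ → ℂ)) Complex.ofReal_eq_zero f

lemma hasCompactSupport_ofRealC₀ : HasCompactSupport (ofRealC₀ f hf) :=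
  hf.comp_left Complex.ofReal_zero

lemma ofRealC₀_eq_zero_of_notMem {s : Set X} (hfs : tsupport f ⊆ s) {x : X} (hx : x ∉ s) :
    ofRealC₀ f hf x = 0 := by
  simp [image_eq_zero_of_notMem_tsupport (fun h => hx (hfs h))]

end ofRealC₀

lemma eventually_fiber_inter_subset [T2Space X] {φ : X → X} {K O : Set X} {x₀ : X}
    (hK : IsCompact K) (hφK : ContinuousOn φ K) (hφx₀ : ContinuousAt φ x₀) (hO : O ∈ 𝓝 x₀)
    (hx₀ : ∀ z ∈ K, φ z = φ x₀ → z = x₀) :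
    ∀ᶠ x in 𝓝 x₀, ∀ z ∈ K, φ z = φ x → z ∈ O := by
  have hcpt : IsCompact (φ '' (K \ interior O)) :=
    (hK.diff isOpen_interior).image_of_continuousOn (hφK.mono sdiff_subset)
  have hy₀ : φ x₀ ∉ φ '' (K \ interior O) := by
    rintro ⟨z, ⟨hzK, hzO⟩, hz⟩
    exact hzO (hx₀ z hzK hz ▸ mem_interior_iff_mem_nhds.mpr hO)
  filter_upwards [hφx₀.preimage_mem_nhds (hcpt.isClosed.isOpen_compl.mem_nhds hy₀)]
    with x hx z hzK hz
  by_contra hzO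
  exact hx ⟨z, ⟨hzK, fun h => hzO (interior_subset h)⟩, hz⟩

lemma Summable.eventually_mem_imp_eq [T1Space X] {S : Set X} {ρ : X → ℝ}
    (hsum : Summable fun x : S => ρ x) {x₀ : X} (hρ : ContinuousAt ρ x₀) (hpos : 0 < ρ x₀) :
    ∀ᶠ z in 𝓝 x₀, z ∈ S → z = x₀ := by
  have hfin : {z : S | ρ x₀ / 2 ≤ ρ z}.Finite := by
    simpa [not_lt] using hsum.tendsto_cofinite_zero.eventually_lt_const (half_pos hpos)
  have hclosed : IsClosed (((↑) '' {z : S | ρ x₀ / 2 ≤ ρ z}) \ {x₀}) :=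
    (hfin.image _).sdiff.isClosed
  filter_upwards [hρ.eventually_const_lt (half_lt_self hpos),
    hclosed.isOpen_compl.mem_nhds (by simp)] with z hz hzS hzmem
  by_contra hne
  exact hzS ⟨⟨⟨z, hzmem⟩, hz.le, rfl⟩, hne⟩

section Fiber

variable {α : Type*} {Δ : Set α} {φ : α → α} {ρ : α → ℝ}

lemma tsum_fiber_eq_zero {a : α → ℂ} {y : α} (h : ∀ x ∈ Fiber Δ φ y, ρ x = 0 ∨ a x = 0) :
    ∑' x : Fiber Δ φ y, (ρ x : ℂ) * a x = 0 :=
  (tsum_congr fun x : Fiber Δ φ y => by rcases h x x.2 with h | h <;> simp [h]).trans tsum_zero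

lemma tsum_fiber_eq_mul {f : α → ℝ} {x y : α} (hx : x ∈ Fiber Δ φ y)
    (h : ∀ z ∈ Fiber Δ φ y, f z ≠ 0 → z = x) :
    ∑' z : Fiber Δ φ y, ρ z * f z = ρ x * f x :=
  tsum_eq_single (⟨x, hx⟩ : Fiber Δ φ y) fun z hz => by
    by_contra hne
    exact hz (Subtype.ext (h z z.2 (right_ne_zero_of_mul hne)))

end Fiber

namespace IsPotential

variable {Δ : Set X} {φ : X → X} {ρ : X → ℝ} {M : ℝ} {f : X → ℝ} {C : ℝ}

lemma summable_mul (hpot : IsPotential Δ φ ρ M) (hf0 : ∀ x, 0 ≤ f x) (hfC : ∀ x, f x ≤ C)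
    (y : X) :
    Summable fun x : Fiber Δ φ y => ρ x * f x :=
  Summable.of_nonneg_of_le (fun x => mul_nonneg (hpot.1 _ x.2.1) (hf0 _))
    (fun x => mul_le_mul_of_nonneg_left (hfC _) (hpot.1 _ x.2.1)) ((hpot.2.1 y).mul_right C)

lemma mul_le_tsum (hpot : IsPotential Δ φ ρ M) (hf0 : ∀ x, 0 ≤ f x) (hfC : ∀ x, f x ≤ C)
    {x : X} (hx : x ∈ Δ) : ρ x * f x ≤ ∑' z : Fiber Δ φ (φ x), ρ z * f z :=
  (hpot.summable_mul hf0 hfC _).le_tsum ⟨x, hx, rfl⟩ fun z _ => mul_nonneg (hpot.1 _ z.2.1) (hf0 _)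

lemma add_le_tsum (hpot : IsPotential Δ φ ρ M) (hf0 : ∀ x, 0 ≤ f x) (hfC : ∀ x, f x ≤ C)
    {x y z : X} (hx : x ∈ Fiber Δ φ y) (hz : z ∈ Fiber Δ φ y) (hxz : x ≠ z) :
    ρ x * f x + ρ z * f z ≤ ∑' w : Fiber Δ φ y, ρ w * f w := by
  classical
  have hne : (⟨x, hx⟩ : Fiber Δ φ y) ≠ ⟨z, hz⟩ := fun h => hxz (congrArg Subtype.val h)
  simpa [Finset.sum_pair hne] using (hpot.summable_mul hf0 hfC y).sum_le_tsum
    {(⟨x, hx⟩ : Fiber Δ φ y), ⟨z, hz⟩} fun w _ => mul_nonneg (hpot.1 _ w.2.1) (hf0 _)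

lemma tsum_ofReal_ne_zero (hpot : IsPotential Δ φ ρ M) (hf0 : ∀ x, 0 ≤ f x)
    (hfC : ∀ x, f x ≤ C) {x : X} (hx : x ∈ Dpos Δ ρ) (hfx : 0 < f x) :
    ∑' z : Fiber Δ φ (φ x), (ρ z : ℂ) * (f z : ℂ) ≠ 0 := by
  simp_rw [← Complex.ofReal_mul, ← Complex.ofReal_tsum, Complex.ofReal_ne_zero]
  exact ((mul_pos hx.2 hfx).trans_le (hpot.mul_le_tsum hf0 hfC hx.1)).ne'

lemma exists_continuous_tsum_eq (hpot : IsPotential Δ φ ρ M) (f : C(X, ℝ))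
    (hf : HasCompactSupport f) (hfΔ : tsupport f ⊆ Δ) :
    ∃ g : C(X, ℝ), ∀ y, g y = ∑' x : Fiber Δ φ y, ρ x * f x := by
  obtain ⟨b, hb⟩ := hpot.2.2.2 (ofRealC₀ f hf) fun x hx => ofRealC₀_eq_zero_of_notMem f hf hfΔ hx
  refine ⟨⟨fun y => (b y).re, by fun_prop⟩, fun y => ?_⟩
  simp [hb, ← Complex.ofReal_mul, ← Complex.ofReal_tsum]

lemma eventually_tsum_fiber_eq_mul [T2Space X] (hpot : IsPotential Δ φ ρ M) (hΔ : IsOpen Δ)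
    (hφ : ContinuousOn φ Δ) {x₀ : X} (hx₀ : x₀ ∈ Δ) (hρ : ContinuousAt ρ x₀) (hpos : 0 < ρ x₀)
    {f : C(X, ℝ)} (hf01 : ∀ x, f x ∈ Icc 0 1) (hfK : IsCompact (tsupport f))
    (hfΔ : tsupport f ⊆ Δ) (hfx₀ : f x₀ = 1) (hfib : ∀ z ∈ tsupport f, φ z = φ x₀ → z = x₀)
    {g : X → ℝ} (hg : ContinuousAt g (φ x₀)) (hgf : ∀ y, g y = ∑' x : Fiber Δ φ y, ρ x * f x) :
    ∀ᶠ x in 𝓝 x₀, g (φ x) = ρ x * f x := by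
  have hφc : ∀ x ∈ Δ, ContinuousAt φ x := fun x hx => hφ.continuousAt (hΔ.mem_nhds hx)
  have hsingle : ∀ x ∈ Δ, (∀ z ∈ tsupport f, φ z = φ x → z = x) → g (φ x) = ρ x * f x :=
    fun x hx h => (hgf _).trans <|
      tsum_fiber_eq_mul ⟨hx, rfl⟩ fun z hz hfz => h z (subset_tsupport _ hfz) hz.2
  have hgx₀ : g (φ x₀) = ρ x₀ := by rw [hsingle x₀ hx₀ hfib, hfx₀, mul_one]
  -- On a fibre through a point near `x₀`, each point of `tsupport f` carries more than half
  -- of the fibre sum `g (φ x)`, so there can be only one such point.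
  have hlarge : ∀ᶠ x in 𝓝 x₀, 2 * ρ x₀ / 3 < ρ x * f x :=
    (hρ.mul f.continuous.continuousAt).eventually_const_lt (by rw [Pi.mul_apply, hfx₀]; linarith)
  have hsmall : ∀ᶠ x in 𝓝 x₀, g (φ x) < 4 * ρ x₀ / 3 :=
    (hg.comp (hφc x₀ hx₀)).eventually_lt_const (by simp only [Function.comp, hgx₀]; linarith)
  filter_upwards [hΔ.mem_nhds hx₀, hlarge, hsmall,
    eventually_fiber_inter_subset hfK (hφ.mono hfΔ) (hφc x₀ hx₀) hlarge hfib]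
    with x hxΔ hx hgx hfibx
  refine hsingle x hxΔ fun z hz hφz => ?_
  by_contra hzx
  have hsum := hpot.add_le_tsum (fun w => (hf01 w).1) (fun w => (hf01 w).2)
    (⟨hfΔ hz, hφz⟩ : z ∈ Fiber Δ φ (φ x)) ⟨hxΔ, rfl⟩ hzx
  linarith [hfibx z hz hφz, hgf (φ x)]

theorem isOpen_Dreg [LocallyCompactSpace X] [T2Space X] (hpot : IsPotential Δ φ ρ M)
    (hΔ : IsOpen Δ) (hφ : ContinuousOn φ Δ) : IsOpen (Dreg Δ ρ) := by
  refine isOpen_iff_mem_nhds.mpr fun x₀ ⟨hx₀Δ, hpos, hcont⟩ => ?_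
  have hρ : ContinuousAt ρ x₀ := hcont.continuousAt (hΔ.mem_nhds hx₀Δ)
  obtain ⟨V, hV, hVopen, hx₀V⟩ := mem_nhds_iff.mp
    (((hpot.2.1 (φ x₀)).eventually_mem_imp_eq hρ hpos).and (hΔ.mem_nhds hx₀Δ))
  obtain ⟨f, hfc, hfV, hf01, hf1⟩ := exists_bump_eventuallyEq_one hVopen hx₀V
  have hfΔ : tsupport f ⊆ Δ := fun x hx => (hV (hfV hx)).2
  obtain ⟨g, hg⟩ := hpot.exists_continuous_tsum_eq f hfc hfΔ
  have hρg : ∀ᶠ x in 𝓝 x₀, ρ x = g (φ x) := by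
    filter_upwards [hpot.eventually_tsum_fiber_eq_mul hΔ hφ hx₀Δ hρ hpos hf01 hfc hfΔ
      hf1.eq_of_nhds (fun z hz hφz => (hV (hfV hz)).1 ⟨hfΔ hz, hφz⟩)
      g.continuous.continuousAt hg, hf1] with x hx hfx
    rw [hx, hfx, Pi.one_apply, mul_one]
  filter_upwards [hΔ.mem_nhds hx₀Δ, hρ.eventually_const_lt hpos,
    eventually_eventually_nhds.mpr hρg] with x hxΔ hxpos hxρ
  have hgφ := g.continuous.continuousAt.comp (hφ.continuousAt (hΔ.mem_nhds hxΔ))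
  exact ⟨hxΔ, hxpos, (hgφ.congr (hxρ.mono fun _ h => h.symm)).continuousWithinAt⟩

lemma tsum_fiber_eq_zero_of_image_subset (hpot : IsPotential Δ φ ρ M) {U : Set X}
    (hU : φ '' (U ∩ Dpos Δ ρ) ⊆ U) {a : X → ℂ} (haU : ∀ x ∉ U, a x = 0) {y : X} (hy : y ∉ U) :
    ∑' x : Fiber Δ φ y, (ρ x : ℂ) * a x = 0 :=
  tsum_fiber_eq_zero fun x hx => by
    by_cases hxU : x ∈ U
    · refine Or.inl ((hpot.1 x hx.1).eq_or_lt.resolve_right fun hpos => hy ?_).symm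
      exact hx.2 ▸ hU ⟨x, ⟨hxU, hx.1, hpos⟩, rfl⟩
    · exact Or.inr (haU x hxU)

lemma image_subset_of_tsum_fiber_eq_zero [LocallyCompactSpace X] [T2Space X]
    (hpot : IsPotential Δ φ ρ M) (hΔ : IsOpen Δ) {U : Set X} (hU : IsOpen U)
    (h : ∀ a : C₀(X, ℂ), (∀ x ∉ Δ, a x = 0) → (∀ x ∉ U, a x = 0) →
      ∀ y ∉ U, (∑' x : Fiber Δ φ y, (ρ x.1 : ℂ) * a x.1) = 0) :
    φ '' (U ∩ Dpos Δ ρ) ⊆ U := by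
  rintro _ ⟨x, ⟨hxU, hx⟩, rfl⟩
  by_contra hφx
  obtain ⟨f, hfc, hfU, hf01, hf1⟩ := exists_bump_eventuallyEq_one (hU.inter hΔ) ⟨hxU, hx.1⟩
  refine hpot.tsum_ofReal_ne_zero (fun z => (hf01 z).1) (fun z => (hf01 z).2) hx
    (by simp [hf1.eq_of_nhds]) ?_
  exact h (ofRealC₀ f hfc)
    (fun z => ofRealC₀_eq_zero_of_notMem f hfc (hfU.trans inter_subset_right))
    (fun z => ofRealC₀_eq_zero_of_notMem f hfc (hfU.trans inter_subset_left)) _ hφx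

lemma eq_zero_of_preimage_subset (hpot : IsPotential Δ φ ρ M) {U : Set X}
    (hU : {x | x ∈ Δ ∧ φ x ∈ U} ∩ Dreg Δ ρ ⊆ U) {a : C₀(X, ℂ)} (hac : HasCompactSupport a)
    (hareg : tsupport a ⊆ Dreg Δ ρ) (hareal : ∀ x, (a x).im = 0 ∧ 0 ≤ (a x).re)
    (hL : ∀ y ∉ U, (∑' x : Fiber Δ φ y, (ρ x.1 : ℂ) * a x.1) = 0) {x : X} (hx : x ∉ U) :
    a x = 0 := by
  by_contra hax
  have hxreg := hareg (subset_tsupport _ hax)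
  have : Nonempty X := ⟨x⟩
  have hre : ∀ z, ((a z).re : ℂ) = a z := fun z => Complex.ext rfl (by simp [(hareal z).1])
  obtain ⟨z₀, hz₀⟩ := (Complex.continuous_re.comp a.continuous)
    |>.exists_forall_ge_of_hasCompactSupport (hac.comp_left Complex.zero_re)
  refine hpot.tsum_ofReal_ne_zero (fun z => (hareal z).2) hz₀ ⟨hxreg.1, hxreg.2.1⟩
    ((hareal x).2.lt_of_ne fun h => hax (Complex.ext h.symm (hareal x).1)) ?_
  simpa only [hre] using hL (φ x) fun h => hx (hU ⟨⟨hxreg.1, h⟩, hxreg⟩)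

lemma preimage_subset_of_eq_zero [LocallyCompactSpace X] [T2Space X]
    (hpot : IsPotential Δ φ ρ M) (hΔ : IsOpen Δ) (hφ : ContinuousOn φ Δ) {U : Set X}
    (hU : IsOpen U)
    (h : ∀ a : C₀(X, ℂ), HasCompactSupport ⇑a → tsupport ⇑a ⊆ Dreg Δ ρ →
      (∀ x : X, (a x).im = 0 ∧ 0 ≤ (a x).re) →
      (∀ y ∉ U, (∑' x : Fiber Δ φ y, (ρ x.1 : ℂ) * a x.1) = 0) → ∀ x ∉ U, a x = 0) :
    {x | x ∈ Δ ∧ φ x ∈ U} ∩ Dreg Δ ρ ⊆ U := by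
  rintro x ⟨⟨hxΔ, hφx⟩, hx⟩
  by_contra hxU
  obtain ⟨f, hfc, hfW, hf01, hf1⟩ := exists_bump_eventuallyEq_one
    ((hpot.isOpen_Dreg hΔ hφ).inter (hφ.isOpen_inter_preimage hΔ hU)) ⟨hx, hxΔ, hφx⟩
  have hfU : tsupport f ⊆ φ ⁻¹' U := hfW.trans (inter_subset_right.trans inter_subset_right)
  have hax := h (ofRealC₀ f hfc) (hasCompactSupport_ofRealC₀ f hfc)
    ((tsupport_ofRealC₀ f hfc).trans_subset (hfW.trans inter_subset_left))
    (fun z => by simp [(hf01 z).1])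
    (fun y hy => tsum_fiber_eq_zero fun z hz =>
      Or.inr (ofRealC₀_eq_zero_of_notMem f hfc hfU fun h => hy (hz.2 ▸ h))) x hxU
  simp [hf1.eq_of_nhds] at hax

end IsPotential

theorem invariance_via_transfer_operator_general
    {X : Type*} [TopologicalSpace X] [LocallyCompactSpace X] [T2Space X]
    (Δ : Set X) (φ : X → X) (ρ : X → ℝ) (M : ℝ)
    (hΔ : IsOpen Δ) (hφ : ContinuousOn φ Δ)
    (hpot : IsPotential Δ φ ρ M)
    (U : Set X) (hU : IsOpen U) :
    ((φ '' (U ∩ Dpos Δ ρ) ⊆ U) ↔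
      ∀ a : C₀(X, ℂ), (∀ x ∉ Δ, a x = 0) → (∀ x ∉ U, a x = 0) →
        ∀ y ∉ U, (∑' x : Fiber Δ φ y, (ρ x.1 : ℂ) * a x.1) = 0) ∧
    (({x | x ∈ Δ ∧ φ x ∈ U} ∩ Dreg Δ ρ ⊆ U) ↔
      ∀ a : C₀(X, ℂ), HasCompactSupport ⇑a → tsupport ⇑a ⊆ Dreg Δ ρ →
        (∀ x : X, (a x).im = 0 ∧ 0 ≤ (a x).re) →
        (∀ y ∉ U, (∑' x : Fiber Δ φ y, (ρ x.1 : ℂ) * a x.1) = 0) →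
        ∀ x ∉ U, a x = 0) :=
  ⟨⟨fun hinv _ _ haU _ hy => hpot.tsum_fiber_eq_zero_of_image_subset hinv haU hy,
      hpot.image_subset_of_tsum_fiber_eq_zero hΔ hU⟩,
    ⟨fun hinv _ hac hareg hareal hL _ hx =>
        hpot.eq_zero_of_preimage_subset hinv hac hareg hareal hL hx,
      hpot.preimage_subset_of_eq_zero hΔ hφ hU⟩⟩

/-- For an open set `U ⊆ X`: (1) `U` is positively invariant
(`φ(U ∩ Δ_pos) ⊆ U`) iff `L` maps `C₀(U) ∩ C₀(Δ)` into `C₀(U)`; (2) `U` is negatively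
invariant (`φ⁻¹(U) ∩ Δ_reg ⊆ U`) iff every nonnegative `a ∈ C_c(Δ_reg)` with `L(a)` vanishing
off `U` itself vanishes off `U`. -/
theorem invariance_via_transfer_operator
    {X : Type*} [TopologicalSpace X] [LocallyCompactSpace X] [T2Space X]
    (Δ : Set X) (φ : X → X) (ρ : X → ℝ) (M : ℝ)
    (hΔ : IsOpen Δ) (hφ : ContinuousOn φ Δ)
    (hcount : ∀ y : X, (Fiber Δ φ y).Countable)
    (hpot : IsPotential Δ φ ρ M)
    (U : Set X) (hU : IsOpen U) :
    ((φ '' (U ∩ Dpos Δ ρ) ⊆ U) ↔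
      ∀ a : C₀(X, ℂ), (∀ x ∉ Δ, a x = 0) → (∀ x ∉ U, a x = 0) →
        ∀ y ∉ U, (∑' x : Fiber Δ φ y, (ρ x.1 : ℂ) * a x.1) = 0) ∧
    (({x | x ∈ Δ ∧ φ x ∈ U} ∩ Dreg Δ ρ ⊆ U) ↔
      ∀ a : C₀(X, ℂ), HasCompactSupport ⇑a → tsupport ⇑a ⊆ Dreg Δ ρ →
        (∀ x : X, (a x).im = 0 ∧ 0 ≤ (a x).re) →
        (∀ y ∉ U, (∑' x : Fiber Δ φ y, (ρ x.1 : ℂ) * a x.1) = 0) →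
        ∀ x ∉ U, a x = 0) :=
  invariance_via_transfer_operator_general Δ φ ρ M hΔ hφ hpot U hU
end
end

section
/- Let (π, T) be a faithful representation of L on a Hilbert space H (π injective). Suppose V ⊆ X is a precompact open set which is contracting, i.e. there are pairwise disjoint nonempty open sets U_k ⊆ Δ_{reg,n_k} ∩ V for k = 1, …, m, with integers n_k ≥ 1, such that V is not contained in the closure of U₁ ∪ … ∪ U_m and the closure of V is contained in φ^{n₁}(U₁) ∪ … ∪ φ^{n_m}(U_m). Then there exist nonzero operators b, c ∈ B(H), with b = Σ_{k=1}^{m} π(√a_k) T^{n_k} for some nonnegative a_k ∈ C_c(U_k) and c = π(c₀) for some nonzero c₀ ∈ C_c(V ∖ closure(U₁ ∪ … ∪ U_m)), such that b* b b = b, b* b c = c, b* c = 0, and π(a) b = b for every a ∈ C₀(X) with a ≡ 1 on V. -/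
open scoped ZeroAtInfty

noncomputable section

variable {X : Type*} [TopologicalSpace X]

/-- A representation `(π, T)` of the transfer operator `L` determined by `(Δ, φ, ρ)`:
`π` is a nondegenerate *-representation of `C₀(X)` and `T` satisfies
`π(L(a)) = T* π(a) T` for all `a ∈ C₀(Δ)`. -/
def IsRep (Δ : Set X) (φ : X → X) (ρ : X → ℝ) {H : Type*} [NormedAddCommGroup H]
    [InnerProductSpace ℂ H] [CompleteSpace H]
    (π : C₀(X, ℂ) →⋆ₙₐ[ℂ] (H →L[ℂ] H)) (T : H →L[ℂ] H) : Prop :=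
  Dense (↑(Submodule.span ℂ {v : H | ∃ (a : C₀(X, ℂ)) (h : H), π a h = v}) : Set H) ∧
  ∀ a b : C₀(X, ℂ), (∀ x ∉ Δ, a x = 0) →
    (∀ y : X, b y = ∑' x : Fiber Δ φ y, (ρ x.1 : ℂ) * a x.1) →
    π b = star T * π a * T

/-- `Δ_{reg,n}`: points whose first `n` iterates stay in `Δ_reg`. -/
def Dregn (Δ : Set X) (ρ : X → ℝ) (φ : X → X) (n : ℕ) : Set X :=
  {x | ∀ k < n, φ^[k] x ∈ Dreg Δ ρ}

/-!
Every point of `closure V` is `φ^{n_k}(x)` for some `x ∈ U_k` whose orbit stays where `ρ > 0`,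
so a bump function at `x` has `L^{n_k}`-image positive near that point. Compactness of
`closure V` gives nonnegative `g_k ∈ C_c(U_k)` with `h = Σ_k L^{n_k} g_k > 0` on `closure V`,
and since `L^n (g · (u ∘ φⁿ)) = Lⁿ g · u`, rescaling by `u = 1/h` yields `a_k` with
`Σ_k L^{n_k} a_k = 1` on `closure V`. The square roots `s_k = √a_k` have disjoint supports, so
`b = Σ_k π(s_k) T^{n_k}` satisfies `b* b = Σ_k T*^{n_k} π(a_k) T^{n_k} = π(Σ_k L^{n_k} a_k)`, a
function equal to `1` on `closure V`; every identity follows from this, with `c₀` a bump at a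
point of `V` outside `closure (⋃ k, U k)`.
-/

open scoped ComplexOrder

section Transfer

variable {α : Type*} {Δ : Set α} {φ : α → α} {ρ : α → ℝ}

/-- The transfer operator `L`, evaluated pointwise on an arbitrary function `a : α → ℂ`
(junk value `0` where the fibre sum is not summable). -/
def transfer (Δ : Set α) (φ : α → α) (ρ : α → ℝ) (a : α → ℂ) (y : α) : ℂ :=
  ∑' x : Fiber Δ φ y, (ρ x : ℂ) * a x

/-- `Δ_n`, the domain of `φⁿ`. -/
def iterDomain (Δ : Set α) (φ : α → α) (n : ℕ) : Set α :=
  {x | ∀ k < n, φ^[k] x ∈ Δ}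

theorem mem_iterDomain_succ {n : ℕ} {x : α} :
    x ∈ iterDomain Δ φ (n + 1) ↔ x ∈ Δ ∧ φ x ∈ iterDomain Δ φ n := by
  refine ⟨fun h => ⟨h 0 n.succ_pos, fun k hk => ?_⟩, fun ⟨h0, h⟩ k hk => ?_⟩
  · rw [← Function.iterate_succ_apply]
    exact h (k + 1) (by omega)
  · cases k with
    | zero => exact h0
    | succ k => exact (Function.iterate_succ_apply φ k x).symm ▸ h k (by omega)

theorem eq_zero_of_support_subset_iterDomain_succ {a : α → ℂ} {n : ℕ}
    (ha : Function.support a ⊆ iterDomain Δ φ (n + 1)) : ∀ x ∉ Δ, a x = 0 :=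
  fun _ hx => Function.notMem_support.mp fun h => hx (mem_iterDomain_succ.mp (ha h)).1

theorem support_transfer_subset (a : α → ℂ) :
    Function.support (transfer Δ φ ρ a) ⊆ φ '' (Δ ∩ Function.support a) := by
  intro y hy
  by_contra hy'
  have hterm (x : Fiber Δ φ y) : (ρ x : ℂ) * a x = 0 := by
    rw [Function.notMem_support.mp fun hx => hy' ⟨x, ⟨x.2.1, hx⟩, x.2.2⟩, mul_zero]
  exact hy (by simp only [transfer, hterm, tsum_zero])

theorem support_transfer_subset_iterDomain {a : α → ℂ} {n : ℕ}
    (ha : Function.support a ⊆ iterDomain Δ φ (n + 1)) :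
    Function.support (transfer Δ φ ρ a) ⊆ iterDomain Δ φ n := by
  rintro _ hy
  obtain ⟨x, ⟨-, hx⟩, rfl⟩ := support_transfer_subset a hy
  exact (mem_iterDomain_succ.mp (ha hx)).2

theorem transfer_iterate_mul_comp (a u : α → ℂ) :
    ∀ n, (transfer Δ φ ρ)^[n] (fun x => a x * u (φ^[n] x)) =
      fun y => (transfer Δ φ ρ)^[n] a y * u y
  | 0 => rfl
  | n + 1 => by
    have step : transfer Δ φ ρ (fun x => a x * u (φ^[n + 1] x)) =
        fun y => transfer Δ φ ρ a y * u (φ^[n] y) := by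
      funext y
      rw [transfer, transfer, ← tsum_mul_right]
      refine tsum_congr fun x => ?_
      rw [Function.iterate_succ_apply, x.2.2, mul_assoc]
    rw [Function.iterate_succ_apply, Function.iterate_succ_apply, step,
      transfer_iterate_mul_comp (transfer Δ φ ρ a) u n]

end Transfer

section IterDomain

variable {Δ : Set X} {φ : X → X}

theorem isOpen_iterDomain (hΔ : IsOpen Δ) (hφ : ContinuousOn φ Δ) :
    ∀ n, IsOpen (iterDomain Δ φ n)
  | 0 => by simp [iterDomain]
  | n + 1 => by
    convert hφ.isOpen_inter_preimage hΔ (isOpen_iterDomain hΔ hφ n) using 1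
    ext x
    exact mem_iterDomain_succ

theorem continuousOn_iterate_iterDomain (hφ : ContinuousOn φ Δ) :
    ∀ n, ContinuousOn φ^[n] (iterDomain Δ φ n)
  | 0 => continuousOn_id
  | n + 1 => (continuousOn_iterate_iterDomain hφ n).comp
      (hφ.mono fun _ hx => (mem_iterDomain_succ.mp hx).1)
      fun _ hx => (mem_iterDomain_succ.mp hx).2

end IterDomain

section TransferBounds

variable {Δ : Set X} {φ : X → X} {ρ : X → ℝ} {M : ℝ} {a f g : X → ℂ} {C : ℝ}

theorem IsPotential.norm_mul_le (hpot : IsPotential Δ φ ρ M) (ha : ∀ x, ‖a x‖ ≤ C) {y : X}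
    (x : Fiber Δ φ y) :
    ‖(ρ x : ℂ) * a x‖ ≤ ρ x * C := by
  rw [norm_mul, Complex.norm_real, Real.norm_of_nonneg (hpot.1 x x.2.1)]
  exact mul_le_mul_of_nonneg_left (ha x) (hpot.1 x x.2.1)

theorem summable_transfer (hpot : IsPotential Δ φ ρ M) (ha : ∀ x, ‖a x‖ ≤ C) (y : X) :
    Summable fun x : Fiber Δ φ y => (ρ x : ℂ) * a x :=
  ((hpot.2.1 y).mul_right C).of_norm_bounded (hpot.norm_mul_le ha)

theorem norm_transfer_le (hpot : IsPotential Δ φ ρ M) (ha : ∀ x, ‖a x‖ ≤ C) (y : X) :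
    ‖transfer Δ φ ρ a y‖ ≤ M * C :=
  calc ‖transfer Δ φ ρ a y‖ ≤ ∑' x : Fiber Δ φ y, ρ x * C :=
        tsum_of_norm_bounded ((hpot.2.1 y).mul_right C).hasSum (hpot.norm_mul_le ha)
    _ = (∑' x : Fiber Δ φ y, ρ x) * C := tsum_mul_right
    _ ≤ M * C := mul_le_mul_of_nonneg_right (hpot.2.2.1 y) ((norm_nonneg _).trans (ha y))

theorem norm_transfer_iterate_le (hpot : IsPotential Δ φ ρ M) (ha : ∀ x, ‖a x‖ ≤ C) :
    ∀ n y, ‖(transfer Δ φ ρ)^[n] a y‖ ≤ M ^ n * C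
  | 0, y => by simpa using ha y
  | n + 1, y => by
    rw [Function.iterate_succ_apply', pow_succ', mul_assoc]
    exact norm_transfer_le hpot (norm_transfer_iterate_le hpot ha n) y

theorem transfer_nonneg (hpot : IsPotential Δ φ ρ M) (ha : ∀ x, 0 ≤ a x) (y : X) :
    0 ≤ transfer Δ φ ρ a y :=
  tsum_nonneg fun x => mul_nonneg (Complex.zero_le_real.mpr (hpot.1 x x.2.1)) (ha x)

theorem transfer_iterate_nonneg (hpot : IsPotential Δ φ ρ M) (ha : ∀ x, 0 ≤ a x) :
    ∀ n y, 0 ≤ (transfer Δ φ ρ)^[n] a y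
  | 0, y => ha y
  | n + 1, y => by
    rw [Function.iterate_succ_apply']
    exact transfer_nonneg hpot (transfer_iterate_nonneg hpot ha n) y

theorem transfer_mono (hpot : IsPotential Δ φ ρ M) (hf : ∀ x, 0 ≤ f x) (hfg : ∀ x, f x ≤ g x)
    (hg : ∀ x, ‖g x‖ ≤ C) (y : X) : transfer Δ φ ρ f y ≤ transfer Δ φ ρ g y :=
  Summable.tsum_le_tsum
    (fun x => mul_le_mul_of_nonneg_left (hfg x) (Complex.zero_le_real.mpr (hpot.1 x x.2.1)))
    (summable_transfer hpot
      (fun x => (CStarAlgebra.norm_le_norm_of_nonneg_of_le (hf x) (hfg x)).trans (hg x)) y)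
    (summable_transfer hpot hg y)

theorem transfer_iterate_mono (hpot : IsPotential Δ φ ρ M) (hf : ∀ x, 0 ≤ f x)
    (hfg : ∀ x, f x ≤ g x) (hg : ∀ x, ‖g x‖ ≤ C) :
    ∀ n y, (transfer Δ φ ρ)^[n] f y ≤ (transfer Δ φ ρ)^[n] g y
  | 0, y => hfg y
  | n + 1, y => by
    simp only [Function.iterate_succ_apply']
    exact transfer_mono hpot (transfer_iterate_nonneg hpot hf n)
      (transfer_iterate_mono hpot hf hfg hg n) (norm_transfer_iterate_le hpot hg n) y

theorem transfer_pos (hpot : IsPotential Δ φ ρ M) (ha₀ : ∀ x, 0 ≤ a x) (ha : ∀ x, ‖a x‖ ≤ C)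
    {x : X} (hx : x ∈ Dpos Δ ρ) (hax : 0 < a x) : 0 < transfer Δ φ ρ a (φ x) :=
  calc 0 < (ρ x : ℂ) * a x := mul_pos (Complex.zero_lt_real.mpr hx.2) hax
    _ ≤ transfer Δ φ ρ a (φ x) := (summable_transfer hpot ha (φ x)).le_tsum ⟨x, hx.1, rfl⟩
        fun y _ => mul_nonneg (Complex.zero_le_real.mpr (hpot.1 y y.2.1)) (ha₀ y)

theorem transfer_iterate_pos (hpot : IsPotential Δ φ ρ M) :
    ∀ (n : ℕ) {a : X → ℂ} {C : ℝ} {x : X}, (∀ x, 0 ≤ a x) → (∀ x, ‖a x‖ ≤ C) →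
      (∀ k < n, φ^[k] x ∈ Dpos Δ ρ) → 0 < a x → 0 < (transfer Δ φ ρ)^[n] a (φ^[n] x)
  | 0, _, _, _, _, _, _, hax => hax
  | n + 1, _, _, x, ha₀, ha, hx, hax => by
    rw [Function.iterate_succ_apply, Function.iterate_succ_apply]
    exact transfer_iterate_pos hpot n (transfer_nonneg hpot ha₀) (norm_transfer_le hpot ha)
      (fun k hk => Function.iterate_succ_apply φ k x ▸ hx (k + 1) (by omega))
      (transfer_pos hpot ha₀ ha (hx 0 n.succ_pos) hax)

end TransferBounds

section Representation

variable {Δ : Set X} {φ : X → X} {ρ : X → ℝ} {M : ℝ}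

theorem exists_transfer_iterate_eq (hpot : IsPotential Δ φ ρ M) :
    ∀ (n : ℕ) (a : C₀(X, ℂ)), Function.support a ⊆ iterDomain Δ φ n →
      ∃ e : C₀(X, ℂ), ⇑e = (transfer Δ φ ρ)^[n] a
  | 0, a, _ => ⟨a, rfl⟩
  | n + 1, a, ha => by
    obtain ⟨b, hb⟩ := hpot.2.2.2 a (eq_zero_of_support_subset_iterDomain_succ ha)
    have hb' : ⇑b = transfer Δ φ ρ a := funext hb
    obtain ⟨e, he⟩ := exists_transfer_iterate_eq hpot n b
      (hb' ▸ support_transfer_subset_iterDomain ha)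
    exact ⟨e, by rw [he, hb', Function.iterate_succ_apply]⟩

theorem IsRep.map_transfer_iterate {H : Type*} [NormedAddCommGroup H] [InnerProductSpace ℂ H]
    [CompleteSpace H] {π : C₀(X, ℂ) →⋆ₙₐ[ℂ] (H →L[ℂ] H)} {T : H →L[ℂ] H}
    (hrep : IsRep Δ φ ρ π T) (hpot : IsPotential Δ φ ρ M) :
    ∀ (n : ℕ) {a e : C₀(X, ℂ)}, Function.support a ⊆ iterDomain Δ φ n →
      ⇑e = (transfer Δ φ ρ)^[n] a → π e = star T ^ n * π a * T ^ n
  | 0, a, e, _, he => by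
    rw [ZeroAtInftyContinuousMap.ext (congrFun he)]
    simp
  | n + 1, a, e, ha, he => by
    have ha' := eq_zero_of_support_subset_iterDomain_succ ha
    obtain ⟨b, hb⟩ := hpot.2.2.2 a ha'
    have hb' : ⇑b = transfer Δ φ ρ a := funext hb
    rw [hrep.map_transfer_iterate hpot n (hb' ▸ support_transfer_subset_iterDomain ha)
      (by rw [he, hb', Function.iterate_succ_apply]), hrep.2 a b ha' hb, pow_succ, pow_succ']
    simp only [mul_assoc]

end Representation

section CompactSupport

theorem ZeroAtInftyContinuousMap.coe_sum {β ι : Type*} [TopologicalSpace β] [AddCommMonoid β]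
    [ContinuousAdd β] (s : Finset ι) (f : ι → C₀(X, β)) :
    ⇑(∑ i ∈ s, f i) = ∑ i ∈ s, ⇑(f i) :=
  map_sum (⟨⟨fun g => ⇑g, rfl⟩, fun _ _ => rfl⟩ : C₀(X, β) →+ (X → β)) f s

theorem ZeroAtInftyContinuousMap.norm_apply_le {β : Type*} [SeminormedAddCommGroup β]
    (f : C₀(X, β)) (x : X) : ‖f x‖ ≤ ‖f‖ :=
  f.toBCF.norm_coe_le_norm x

theorem exists_zeroAtInfty_eq {β : Type*} [TopologicalSpace β] [Zero β] {f : X → β}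
    (hf : Continuous f) (hc : HasCompactSupport f) : ∃ g : C₀(X, β), ⇑g = f :=
  ⟨⟨⟨f, hf⟩, hc.is_zero_at_infty⟩, rfl⟩

theorem tsupport_finset_sum_subset {β ι : Type*} [AddCommMonoid β] (s : Finset ι)
    (f : ι → X → β) : tsupport (∑ i ∈ s, f i) ⊆ ⋃ i ∈ s, tsupport (f i) :=
  calc tsupport (∑ i ∈ s, f i) ⊆ closure (⋃ i ∈ s, Function.support (f i)) :=
        closure_mono (by rw [Finset.sum_fn]; exact s.support_sum f)
    _ = ⋃ i ∈ s, tsupport (f i) := s.closure_biUnion _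

def IsNonnegCc (Ω : Set X) (f : X → ℂ) : Prop :=
  HasCompactSupport f ∧ tsupport f ⊆ Ω ∧ ∀ x, 0 ≤ f x

theorem IsNonnegCc.support_subset {Ω : Set X} {f : X → ℂ} (hf : IsNonnegCc Ω f) :
    Function.support f ⊆ Ω :=
  (subset_tsupport f).trans hf.2.1

theorem ZeroAtInftyContinuousMap.isSelfAdjoint_of_nonneg {f : C₀(X, ℂ)} (hf : ∀ x, 0 ≤ f x) :
    IsSelfAdjoint f := by
  ext x
  exact (IsSelfAdjoint.of_nonneg (hf x)).star_eq

theorem IsNonnegCc.sum {ι : Type*} {Ω : Set X} {s : Finset ι} {f : ι → X → ℂ}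
    (hf : ∀ i ∈ s, IsNonnegCc Ω (f i)) : IsNonnegCc Ω (∑ i ∈ s, f i) := by
  have hsub := tsupport_finset_sum_subset s f
  refine ⟨.of_isClosed_subset (s.isCompact_biUnion fun i hi => (hf i hi).1)
    (isClosed_tsupport _) hsub, hsub.trans (Set.iUnion₂_subset fun i hi => (hf i hi).2.1),
    fun x => ?_⟩
  rw [Finset.sum_apply]
  exact Finset.sum_nonneg fun i hi => (hf i hi).2.2 x

theorem exists_isNonnegCc_apply_eq_one [LocallyCompactSpace X] [T2Space X] {Ω : Set X}
    {x₀ : X} (hΩ : IsOpen Ω) (hx₀ : x₀ ∈ Ω) : ∃ f : C₀(X, ℂ), IsNonnegCc Ω f ∧ f x₀ = 1 := by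
  obtain ⟨f, hf₁, hfc, hfΩ, hf₀₁⟩ := exists_continuousMap_one_of_isCompact_subset_isOpen
    isCompact_singleton hΩ (Set.singleton_subset_iff.mpr hx₀)
  have hc : HasCompactSupport (((↑) : ℝ → ℂ) ∘ f) :=
    HasCompactSupport.comp_left hfc Complex.ofReal_zero
  obtain ⟨g, hg⟩ := exists_zeroAtInfty_eq (by fun_prop) hc
  refine ⟨g, ⟨hg ▸ hc, hg ▸ (tsupport_comp_subset Complex.ofReal_zero f).trans hfΩ,
    fun x => hg ▸ Complex.zero_le_real.mpr (hf₀₁ x).1⟩, ?_⟩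
  simp [hg, hf₁ rfl]

theorem IsNonnegCc.exists_sqrt {Ω : Set X} {a : C₀(X, ℂ)} (ha : IsNonnegCc Ω a) :
    ∃ s : C₀(X, ℂ), (∀ x, s x = (√(a x).re : ℂ)) ∧ IsNonnegCc Ω s ∧ s * s = a := by
  set g : ℂ → ℂ := fun z => (√z.re : ℂ)
  have hg₀ : g 0 = 0 := by simp [g]
  have hc : HasCompactSupport (g ∘ a) := ha.1.comp_left hg₀
  obtain ⟨s, hs⟩ := exists_zeroAtInfty_eq (by fun_prop) hc
  refine ⟨s, fun x => by rw [hs]; rfl, ⟨hs ▸ hc, hs ▸ (tsupport_comp_subset hg₀ a).trans ha.2.1,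
    fun x => hs ▸ Complex.zero_le_real.mpr (Real.sqrt_nonneg _)⟩, ?_⟩
  ext x
  rw [ZeroAtInftyContinuousMap.mul_apply, hs, Function.comp_apply, ← Complex.ofReal_mul,
    Real.mul_self_sqrt (Complex.nonneg_iff.mp (ha.2.2 x)).1,
    ← Complex.eq_re_of_ofReal_le (ha.2.2 x)]

theorem ZeroAtInftyContinuousMap.mul_eq_right_of_eq_one {β : Type*} [TopologicalSpace β]
    [MulZeroOneClass β] [ContinuousMul β] {f g : C₀(X, β)} (h : ∀ x, g x ≠ 0 → f x = 1) :
    f * g = g := by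
  ext x
  rw [mul_apply]
  by_cases hx : g x = 0
  · rw [hx, mul_zero]
  · rw [h x hx, one_mul]

theorem ZeroAtInftyContinuousMap.mul_eq_zero_of_disjoint {β : Type*} [TopologicalSpace β]
    [MulZeroClass β] [ContinuousMul β] {f g : C₀(X, β)}
    (h : Disjoint (Function.support f) (Function.support g)) : f * g = 0 := by
  ext x
  rw [mul_apply, zero_apply]
  by_cases hx : f x = 0
  · rw [hx, zero_mul]
  · rw [Function.notMem_support.mp (Set.disjoint_left.mp h hx), mul_zero]

end CompactSupport

section Construction

variable {Δ : Set X} {φ : X → X} {ρ : X → ℝ} {M : ℝ}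

theorem exists_continuous_nonneg_mul_eq_one {h : X → ℂ} (hh : Continuous h) {K : Set X}
    (hK : IsCompact K) (hpos : ∀ z ∈ K, 0 < h z) :
    ∃ u : X → ℂ, Continuous u ∧ (∀ z, 0 ≤ u z) ∧ ∀ z ∈ K, h z * u z = 1 := by
  obtain ⟨ε, hε, hεK⟩ := hK.exists_forall_le' (f := fun z => (h z).re) (by fun_prop)
    fun z hz => (Complex.pos_iff.mp (hpos z hz)).1
  have hmax : ∀ z, 0 < max (h z).re ε := fun z => hε.trans_le (le_max_right _ _)
  refine ⟨fun z => ((max (h z).re ε)⁻¹ : ℝ), ?_, fun z => ?_, fun z hz => ?_⟩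
  · exact Complex.continuous_ofReal.comp
      (((Complex.continuous_re.comp hh).max continuous_const).inv₀ fun z => (hmax z).ne')
  · exact Complex.zero_le_real.mpr (inv_nonneg.mpr (hmax z).le)
  · have hre : h z = (h z).re :=
      Complex.eq_re_of_ofReal_le (by rw [Complex.ofReal_zero]; exact (hpos z hz).le)
    show h z * ((max (h z).re ε)⁻¹ : ℝ) = 1
    rw [max_eq_left (hεK z hz), hre, ← Complex.ofReal_mul, Complex.ofReal_re,
      mul_inv_cancel₀ (hε.trans_le (hεK z hz)).ne', Complex.ofReal_one]

theorem IsNonnegCc.exists_mul_comp_iterate (hΔ : IsOpen Δ) (hφ : ContinuousOn φ Δ)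
    {Ω : Set X} {n : ℕ} {g : C₀(X, ℂ)} (hg : IsNonnegCc Ω g) (hΩ : Ω ⊆ iterDomain Δ φ n)
    {u : X → ℂ} (hu : Continuous u) (hu₀ : ∀ z, 0 ≤ u z) :
    ∃ a : C₀(X, ℂ), IsNonnegCc Ω a ∧ ⇑a = fun x => g x * u (φ^[n] x) := by
  have hts : tsupport (fun x => g x * u (φ^[n] x)) ⊆ Ω := tsupport_mul_subset_left.trans hg.2.1
  have hc : HasCompactSupport fun x => g x * u (φ^[n] x) := hg.1.mul_right
  have hcont : Continuous fun x => g x * u (φ^[n] x) :=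
    (g.continuous.continuousOn.mul (hu.comp_continuousOn
      (continuousOn_iterate_iterDomain hφ n))).continuous_of_tsupport_subset
      (isOpen_iterDomain hΔ hφ n) (hts.trans hΩ)
  obtain ⟨a, ha⟩ := exists_zeroAtInfty_eq hcont hc
  exact ⟨a, ⟨ha ▸ hc, ha ▸ hts, fun x => ha ▸ mul_nonneg (hg.2.2 x) (hu₀ _)⟩, ha⟩

variable [LocallyCompactSpace X] [T2Space X] {ι : Type*} [Fintype ι] {n : ι → ℕ}
  {U : ι → Set X} {K : Set X}

theorem exists_isNonnegCc_transfer_iterate_pos (hpot : IsPotential Δ φ ρ M)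
    (hU : ∀ k, IsOpen (U k)) (hUpos : ∀ k, ∀ x ∈ U k, ∀ j < n k, φ^[j] x ∈ Dpos Δ ρ)
    (hK : IsCompact K) (hKU : K ⊆ ⋃ k, φ^[n k] '' U k) :
    ∃ g : ι → C₀(X, ℂ), (∀ k, IsNonnegCc (U k) (g k)) ∧
      ∀ z ∈ K, 0 < ∑ k, (transfer Δ φ ρ)^[n k] (g k) z := by
  have hpt (y : K) : ∃ k, ∃ f : C₀(X, ℂ), IsNonnegCc (U k) f ∧
      0 < (transfer Δ φ ρ)^[n k] f y := by
    obtain ⟨k, x, hx, hxy⟩ := Set.mem_iUnion.mp (hKU y.2)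
    obtain ⟨f, hf, hfx⟩ := exists_isNonnegCc_apply_eq_one (hU k) hx
    exact ⟨k, f, hf, hxy ▸ transfer_iterate_pos hpot (n k) hf.2.2 f.norm_apply_le
      (hUpos k x hx) (hfx ▸ one_pos)⟩
  choose kk f hf hfpos using hpt
  have hopen (y : K) : IsOpen {z | (transfer Δ φ ρ)^[n (kk y)] (f y) z ≠ 0} := by
    obtain ⟨e, he⟩ := exists_transfer_iterate_eq hpot _ (f y) ((hf y).support_subset.trans
      fun x hx j hj => (hUpos _ x hx j hj).1)
    rw [← he]
    exact isOpen_ne_fun e.continuous continuous_const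
  obtain ⟨t, hKt⟩ := hK.elim_finite_subcover _ hopen
    fun z hz => Set.mem_iUnion.mpr ⟨⟨z, hz⟩, (hfpos ⟨z, hz⟩).ne'⟩
  classical
  set g : ι → C₀(X, ℂ) := fun k => ∑ y ∈ t with kk y = k, f y
  have hg (k : ι) : IsNonnegCc (U k) (g k) := by
    rw [ZeroAtInftyContinuousMap.coe_sum]
    exact IsNonnegCc.sum fun y hy => (Finset.mem_filter.mp hy).2 ▸ hf y
  refine ⟨g, hg, fun z hz => ?_⟩
  obtain ⟨y, hyt, hzy⟩ := Set.mem_iUnion₂.mp (hKt hz)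
  have hfg : ∀ x, f y x ≤ g (kk y) x := fun x => by
    rw [ZeroAtInftyContinuousMap.coe_sum, Finset.sum_apply]
    exact Finset.single_le_sum (fun y' _ => (hf y').2.2 x)
      (Finset.mem_filter.mpr ⟨hyt, rfl⟩)
  calc 0 < (transfer Δ φ ρ)^[n (kk y)] (f y) z :=
        lt_of_le_of_ne (transfer_iterate_nonneg hpot (hf y).2.2 _ z) (Ne.symm hzy)
    _ ≤ (transfer Δ φ ρ)^[n (kk y)] (g (kk y)) z :=
        transfer_iterate_mono hpot (hf y).2.2 hfg (g (kk y)).norm_apply_le _ z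
    _ ≤ ∑ k, (transfer Δ φ ρ)^[n k] (g k) z :=
        Finset.single_le_sum (f := fun k => (transfer Δ φ ρ)^[n k] (g k) z)
          (fun k _ => transfer_iterate_nonneg hpot (hg k).2.2 _ z) (Finset.mem_univ _)

theorem exists_isNonnegCc_sum_transfer_iterate_eq_one (hpot : IsPotential Δ φ ρ M)
    (hΔ : IsOpen Δ) (hφ : ContinuousOn φ Δ) (hU : ∀ k, IsOpen (U k))
    (hUpos : ∀ k, ∀ x ∈ U k, ∀ j < n k, φ^[j] x ∈ Dpos Δ ρ)
    (hK : IsCompact K) (hKU : K ⊆ ⋃ k, φ^[n k] '' U k) :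
    ∃ a : ι → C₀(X, ℂ), (∀ k, IsNonnegCc (U k) (a k)) ∧
      ∀ z ∈ K, ∑ k, (transfer Δ φ ρ)^[n k] (a k) z = 1 := by
  have hUD (k : ι) : U k ⊆ iterDomain Δ φ (n k) := fun x hx j hj => (hUpos k x hx j hj).1
  obtain ⟨g, hg, hgpos⟩ := exists_isNonnegCc_transfer_iterate_pos hpot hU hUpos hK hKU
  choose e he using fun k => exists_transfer_iterate_eq hpot (n k) (g k)
    ((hg k).support_subset.trans (hUD k))
  have hsum : ⇑(∑ k, e k) = fun z => ∑ k, (transfer Δ φ ρ)^[n k] (g k) z := by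
    rw [ZeroAtInftyContinuousMap.coe_sum, Finset.sum_fn, funext_iff]
    simp [he]
  obtain ⟨u, hu, hu₀, hu₁⟩ :=
    exists_continuous_nonneg_mul_eq_one (hsum ▸ map_continuous (∑ k, e k)) hK hgpos
  choose a ha using fun k => (hg k).exists_mul_comp_iterate hΔ hφ (hUD k) hu hu₀
  refine ⟨a, fun k => (ha k).1, fun z hz => ?_⟩
  simp only [(ha _).2, transfer_iterate_mul_comp, ← Finset.sum_mul]
  exact hu₁ z hz

end Construction

section Operators

theorem star_sum_mul_sum_of_pairwise_mul_eq_zero {R ι : Type*} [NonUnitalRing R] [StarRing R]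
    [Fintype ι] (p t : ι → R) (hp : ∀ k, IsSelfAdjoint (p k))
    (horth : Pairwise fun k l => p k * p l = 0) :
    star (∑ k, p k * t k) * ∑ k, p k * t k = ∑ k, star (t k) * (p k * p k) * t k := by
  rw [star_sum, Finset.sum_mul_sum]
  refine Finset.sum_congr rfl fun k _ => ?_
  rw [star_mul, (hp k).star_eq]
  rw [Finset.sum_eq_single k (fun l _ hlk => ?_) (absurd (Finset.mem_univ k))]
  · simp only [mul_assoc]
  · rw [mul_assoc, ← mul_assoc (p k), horth hlk.symm, zero_mul, mul_zero]

theorem map_mul_sum_mul_of_mul_eq {F A B ι : Type*} [Mul A] [NonUnitalSemiring B]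
    [FunLike F A B] [MulHomClass F A B] (π : F) (s : Finset ι) {f : A} {p : ι → A} (t : ι → B)
    (h : ∀ k ∈ s, f * p k = p k) : π f * ∑ k ∈ s, π (p k) * t k = ∑ k ∈ s, π (p k) * t k := by
  rw [Finset.mul_sum]
  exact Finset.sum_congr rfl fun k hk => by rw [← mul_assoc, ← map_mul, h k hk]

theorem star_sum_map_mul_mul_map_eq_zero {F A B ι : Type*} [NonUnitalNonAssocSemiring A]
    [Star A] [NonUnitalSemiring B] [StarRing B] [FunLike F A B] [NonUnitalRingHomClass F A B]
    [StarHomClass F A B] (π : F) (s : Finset ι) {c : A} {p : ι → A} (t : ι → B)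
    (hp : ∀ k ∈ s, IsSelfAdjoint (p k)) (h : ∀ k ∈ s, p k * c = 0) :
    star (∑ k ∈ s, π (p k) * t k) * π c = 0 := by
  rw [star_sum, Finset.sum_mul]
  refine Finset.sum_eq_zero fun k hk => ?_
  rw [star_mul, ← map_star, (hp k hk).star_eq, mul_assoc, ← map_mul, h k hk, map_zero, mul_zero]

variable {Δ : Set X} {φ : X → X} {ρ : X → ℝ} {M : ℝ}

theorem IsRep.exists_star_sum_mul_sum_eq {H : Type*} [NormedAddCommGroup H]
    [InnerProductSpace ℂ H] [CompleteSpace H] {π : C₀(X, ℂ) →⋆ₙₐ[ℂ] (H →L[ℂ] H)}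
    {T : H →L[ℂ] H} (hrep : IsRep Δ φ ρ π T) (hpot : IsPotential Δ φ ρ M) {ι : Type*}
    [Fintype ι] {n : ι → ℕ} {U : ι → Set X} (hUdisj : Pairwise fun k l => Disjoint (U k) (U l))
    (hUD : ∀ k, U k ⊆ iterDomain Δ φ (n k)) {s : ι → C₀(X, ℂ)}
    (hs : ∀ k, IsNonnegCc (U k) (s k)) :
    ∃ e : C₀(X, ℂ), (⇑e = fun z => ∑ k, (transfer Δ φ ρ)^[n k] ⇑(s k * s k) z) ∧
      star (∑ k, π (s k) * T ^ n k) * ∑ k, π (s k) * T ^ n k = π e := by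
  choose e he using fun k => exists_transfer_iterate_eq hpot (n k) (s k * s k)
    ((Function.support_mul_subset_left _ _).trans ((hs k).support_subset.trans (hUD k)))
  refine ⟨∑ k, e k, by simp [ZeroAtInftyContinuousMap.coe_sum, Finset.sum_fn, he], ?_⟩
  rw [star_sum_mul_sum_of_pairwise_mul_eq_zero _ _
    (fun k => (ZeroAtInftyContinuousMap.isSelfAdjoint_of_nonneg (hs k).2.2).map π) ?_, map_sum]
  · refine Finset.sum_congr rfl fun k _ => ?_
    rw [← map_mul, hrep.map_transfer_iterate hpot (n k) _ (he k), star_pow]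
    exact (Function.support_mul_subset_left _ _).trans ((hs k).support_subset.trans (hUD k))
  · intro k l hkl
    rw [← map_mul, ZeroAtInftyContinuousMap.mul_eq_zero_of_disjoint, map_zero]
    exact (hUdisj hkl).mono (hs k).support_subset (hs l).support_subset

end Operators

theorem scaling_elements_general
    {X : Type*} [TopologicalSpace X] [LocallyCompactSpace X] [T2Space X]
    (Δ : Set X) (φ : X → X) (ρ : X → ℝ) (M : ℝ)
    (hΔ : IsOpen Δ) (hφ : ContinuousOn φ Δ)
    (hpot : IsPotential Δ φ ρ M)
    {H : Type*} [NormedAddCommGroup H] [InnerProductSpace ℂ H] [CompleteSpace H]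
    (π : C₀(X, ℂ) →⋆ₙₐ[ℂ] (H →L[ℂ] H)) (T : H →L[ℂ] H)
    (hrep : IsRep Δ φ ρ π T) (hfaith : Function.Injective ⇑π)
    (V : Set X) (hV : IsOpen V) (hVcpt : IsCompact (closure V))
    (m : ℕ) (nk : Fin m → ℕ)
    (U : Fin m → Set X) (hUopen : ∀ k, IsOpen (U k))
    (hUsub : ∀ k, U k ⊆ Dregn Δ ρ φ (nk k) ∩ V)
    (hUdisj : ∀ k l, k ≠ l → Disjoint (U k) (U l))
    (hVnotsub : ¬ V ⊆ closure (⋃ k, U k))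
    (hVcover : closure V ⊆ ⋃ k, φ^[nk k] '' U k) :
    ∃ (a : Fin m → C₀(X, ℂ)) (s : Fin m → C₀(X, ℂ)) (c₀ : C₀(X, ℂ)),
      (∀ k, HasCompactSupport ⇑(a k) ∧ tsupport ⇑(a k) ⊆ U k ∧
        ∀ x : X, (a k x).im = 0 ∧ 0 ≤ (a k x).re) ∧
      (∀ (k : Fin m) (x : X), s k x = (Real.sqrt ((a k x).re) : ℂ)) ∧
      HasCompactSupport ⇑c₀ ∧ tsupport ⇑c₀ ⊆ V \ closure (⋃ k, U k) ∧ c₀ ≠ 0 ∧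
      ∃ b : H →L[ℂ] H, b = ∑ k : Fin m, π (s k) * T ^ nk k ∧
        b ≠ 0 ∧ π c₀ ≠ 0 ∧
        star b * b * b = b ∧ star b * b * π c₀ = π c₀ ∧ star b * π c₀ = 0 ∧
        ∀ a' : C₀(X, ℂ), (∀ x ∈ V, a' x = 1) → π a' * b = b := by
  obtain ⟨v₀, hv₀V, hv₀U⟩ := Set.not_subset.mp hVnotsub
  have hUpos (k : Fin m) : ∀ x ∈ U k, ∀ j < nk k, φ^[j] x ∈ Dpos Δ ρ := fun x hx j hj =>
    ⟨((hUsub k hx).1 j hj).1, ((hUsub k hx).1 j hj).2.1⟩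
  obtain ⟨a, ha, ha₁⟩ := exists_isNonnegCc_sum_transfer_iterate_eq_one hpot hΔ hφ hUopen hUpos
    hVcpt hVcover
  choose s hs hsU hsa using fun k => (ha k).exists_sqrt
  obtain ⟨e, he, hbb⟩ := hrep.exists_star_sum_mul_sum_eq hpot (fun k l => hUdisj k l)
    (fun k x hx j hj => (hUpos k x hx j hj).1) hsU
  have he₁ (x : X) (hx : x ∈ closure V) : e x = 1 := by simpa only [he, hsa] using ha₁ x hx
  obtain ⟨c₀, hc₀, hc₀v₀⟩ := exists_isNonnegCc_apply_eq_one (hV.sdiff isClosed_closure) ⟨hv₀V, hv₀U⟩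
  have hc₀ne : c₀ ≠ 0 := fun h => by simp [h] at hc₀v₀
  set b := ∑ k, π (s k) * T ^ nk k
  have hπb (f : C₀(X, ℂ)) (hf : ∀ x ∈ V, f x = 1) : π f * b = b :=
    map_mul_sum_mul_of_mul_eq π _ _ fun k _ => ZeroAtInftyContinuousMap.mul_eq_right_of_eq_one
      fun x hx => hf x (hUsub k ((hsU k).support_subset hx)).2
  refine ⟨a, s, c₀, fun k => ⟨(ha k).1, (ha k).2.1, fun x => ?_⟩, hs, hc₀.1, hc₀.2.1, hc₀ne, b,
    rfl, fun hb₀ => ?_, (map_ne_zero_iff π hfaith).mpr hc₀ne, ?_, ?_, ?_, hπb⟩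
  · exact ⟨(Complex.nonneg_iff.mp ((ha k).2.2 x)).2.symm, (Complex.nonneg_iff.mp ((ha k).2.2 x)).1⟩
  · have h₀ : e = 0 := hfaith (by rw [← hbb, hb₀, mul_zero, map_zero])
    simpa [h₀] using he₁ v₀ (subset_closure hv₀V)
  · rw [hbb]
    exact hπb e fun x hx => he₁ x (subset_closure hx)
  · rw [hbb, ← map_mul, ZeroAtInftyContinuousMap.mul_eq_right_of_eq_one
      fun x hx => he₁ x (subset_closure (hc₀.support_subset hx).1)]
  · refine star_sum_map_mul_mul_map_eq_zero π _ _
      (fun k _ => ZeroAtInftyContinuousMap.isSelfAdjoint_of_nonneg (hsU k).2.2) fun k _ => ?_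
    refine ZeroAtInftyContinuousMap.mul_eq_zero_of_disjoint (Set.disjoint_left.mpr
      fun x hx hx' => (hc₀.support_subset hx').2 (subset_closure (Set.mem_iUnion.mpr ⟨k, ?_⟩)))
    exact (hsU k).support_subset hx

/-- Scaling elements from a contracting precompact open set: if `V` is a
precompact open contracting set, then there are nonzero elements `b = Σ_k π(√a_k) T^{n_k}`
(with `a_k ∈ C_c(U_k)` nonnegative) and `c = π(c₀)` with `c₀ ∈ C_c(V ∖ closure(⋃ U_k))`
nonzero, satisfying `b* b b = b`, `b* b c = c`, `b* c = 0`, and `π(a) b = b` for every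
`a ∈ C₀(X)` equal to `1` on `V`. -/
theorem scaling_elements
    {X : Type*} [TopologicalSpace X] [LocallyCompactSpace X] [T2Space X]
    (Δ : Set X) (φ : X → X) (ρ : X → ℝ) (M : ℝ)
    (hΔ : IsOpen Δ) (hφ : ContinuousOn φ Δ)
    (hcount : ∀ y : X, (Fiber Δ φ y).Countable)
    (hpot : IsPotential Δ φ ρ M)
    {H : Type*} [NormedAddCommGroup H] [InnerProductSpace ℂ H] [CompleteSpace H]
    (π : C₀(X, ℂ) →⋆ₙₐ[ℂ] (H →L[ℂ] H)) (T : H →L[ℂ] H)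
    (hrep : IsRep Δ φ ρ π T) (hfaith : Function.Injective ⇑π)
    (V : Set X) (hV : IsOpen V) (hVcpt : IsCompact (closure V))
    (m : ℕ) (nk : Fin m → ℕ) (hnk : ∀ k, 1 ≤ nk k)
    (U : Fin m → Set X) (hUopen : ∀ k, IsOpen (U k)) (hUne : ∀ k, (U k).Nonempty)
    (hUsub : ∀ k, U k ⊆ Dregn Δ ρ φ (nk k) ∩ V)
    (hUdisj : ∀ k l, k ≠ l → Disjoint (U k) (U l))
    (hVnotsub : ¬ V ⊆ closure (⋃ k, U k))
    (hVcover : closure V ⊆ ⋃ k, φ^[nk k] '' U k) :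
    ∃ (a : Fin m → C₀(X, ℂ)) (s : Fin m → C₀(X, ℂ)) (c₀ : C₀(X, ℂ)),
      (∀ k, HasCompactSupport ⇑(a k) ∧ tsupport ⇑(a k) ⊆ U k ∧
        ∀ x : X, (a k x).im = 0 ∧ 0 ≤ (a k x).re) ∧
      (∀ (k : Fin m) (x : X), s k x = (Real.sqrt ((a k x).re) : ℂ)) ∧
      HasCompactSupport ⇑c₀ ∧ tsupport ⇑c₀ ⊆ V \ closure (⋃ k, U k) ∧ c₀ ≠ 0 ∧
      ∃ b : H →L[ℂ] H, b = ∑ k : Fin m, π (s k) * T ^ nk k ∧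
        b ≠ 0 ∧ π c₀ ≠ 0 ∧
        star b * b * b = b ∧ star b * b * π c₀ = π c₀ ∧ star b * π c₀ = 0 ∧
        ∀ a' : C₀(X, ℂ), (∀ x ∈ V, a' x = 1) → π a' * b = b :=
  scaling_elements_general Δ φ ρ M hΔ hφ hpot π T hrep hfaith V hV hVcpt m nk U hUopen hUsub hUdisj
    hVnotsub hVcover
end
end
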